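/- arXiv:1612.06563 — 6 statements merged into one kernel-verified Lean document; each statement's English description precedes it below -/
import Mathlib

section
/- For every nonnegative integer m, one has the identity of formal power series D^m f(t) = ∑_{i=0}^{m+1} f_{m,i}(t)·h(t)^i in ℚ⟦t⟧. -/
open Polynomial PowerSeries

/-- The polynomials `f_{m,i}(t)` defined recursively. -/
noncomputable def fmi : ℕ → ℕ → Polynomial ℚ
  | 0, 0 => Polynomial.C (1/2) * Polynomial.X - 1
  | 0, 1 => 1
  | 0, _ + 2 => 0
  | m + 1, 0 => Polynomial.X * Polynomial.derivative (fmi m 0)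
  | m + 1, i + 1 =>
    if i = m + 1 then -((m : ℚ) + 1) • fmi m (m + 1)
    else if i + 1 ≤ m + 1 then
      Polynomial.X * Polynomial.derivative (fmi m (i + 1))
        + Polynomial.C ((i : ℚ) + 1) * (1 - Polynomial.X) * fmi m (i + 1)
        - Polynomial.C (i : ℚ) * fmi m i
    else 0

/-- The polynomials `g_{m,i}(t)` defined recursively. -/
noncomputable def gmi : ℕ → ℕ → Polynomial ℚ
  | m, i =>
    if i = m + 1 then Polynomial.C ((-1 : ℚ) ^ m / m.factorial)
    else if h : 1 ≤ i ∧ i ≤ m then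
      Polynomial.C ((-1 : ℚ) ^ (m + 1) / m.factorial) *
        ∑ j ∈ (Finset.Icc i m).attach, fmi m j.1 * gmi (j.1 - 1) i
    else 0
  termination_by m i => m
  decreasing_by
    have hj := Finset.mem_Icc.mp j.2
    omega

/-- The Bernoulli generating series `h(t) = t/(e^t - 1)`. -/
noncomputable def hps : PowerSeries ℚ := bernoulliPowerSeries ℚ

/-- `f(t) = h(t) - 1 + t/2`. -/
noncomputable def fps : PowerSeries ℚ :=
  hps - 1 + PowerSeries.C (R := ℚ) (1/2) * PowerSeries.X

/-- `g(t) = h(t) + t/2`. -/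
noncomputable def gps : PowerSeries ℚ :=
  hps + PowerSeries.C (R := ℚ) (1/2) * PowerSeries.X

/-- The derivation `D = t·(d/dt)` on `ℚ⟦t⟧`. -/
noncomputable def Dop (φ : PowerSeries ℚ) : PowerSeries ℚ :=
  PowerSeries.X * φ.derivativeFun

/-!
Differentiating `h · (exp t - 1) = t` gives the Riccati equation `D h = (1 - t) h - h²`.
Since `D` is a derivation, `D (p · hⁱ) = (D p + i (1 - t) p) hⁱ - i p hⁱ⁺¹` for a
polynomial `p`, so `D` sends `∑ pᵢ hⁱ` to `∑ qᵢ hⁱ` with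
`qᵢ = D pᵢ + i (1 - t) pᵢ - (i - 1) pᵢ₋₁` (and `p₋₁ = 0`): this is the recursion defining
`f_{m,i}`, and the theorem follows by induction on `m`, starting from `f = (t/2 - 1) + h`.
-/

noncomputable def eulerDerivation : Derivation ℚ ℚ⟦X⟧ ℚ⟦X⟧ :=
  (PowerSeries.X : ℚ⟦X⟧) • d⁄dX ℚ

theorem Dop_apply (φ : ℚ⟦X⟧) : Dop φ = eulerDerivation φ := rfl

theorem Dop_coe (p : ℚ[X]) : Dop p = ((Polynomial.X * derivative p : ℚ[X]) : ℚ⟦X⟧) := by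
  simp only [Dop_apply, eulerDerivation, Derivation.smul_apply, smul_eq_mul,
    PowerSeries.derivative_coe, Polynomial.coe_mul, Polynomial.coe_X]

theorem Dop_hps : Dop hps = (1 - PowerSeries.X) * hps - hps ^ 2 := by
  have hE : hps * (PowerSeries.exp ℚ - 1) = PowerSeries.X :=
    bernoulliPowerSeries_mul_exp_sub_one ℚ
  have hdE := congrArg (d⁄dX ℚ) hE
  simp only [Derivation.leibniz, map_sub, derivative_exp, PowerSeries.derivative_one,
    PowerSeries.derivative_X, smul_eq_mul, sub_zero] at hdE
  have hne : PowerSeries.exp ℚ - 1 ≠ 0 := fun h => by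
    simpa [PowerSeries.exp] using congrArg (PowerSeries.coeff 1) h
  refine mul_right_cancel₀ hne ?_
  simp only [Dop_apply, eulerDerivation, Derivation.smul_apply, smul_eq_mul]
  linear_combination (hps - 1) * hE + PowerSeries.X * hdE

theorem Dop_hps_pow (i : ℕ) :
    Dop (hps ^ i) = (i : ℚ⟦X⟧) * ((1 - PowerSeries.X) * hps ^ i - hps ^ (i + 1)) := by
  cases i with
  | zero => simp [Dop_apply]
  | succ i =>
    rw [Dop_apply, Derivation.leibniz_pow, ← Dop_apply, Dop_hps]
    simp only [Nat.add_sub_cancel, nsmul_eq_mul, smul_eq_mul]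
    ring

noncomputable def dopDiag (i : ℕ) (p : ℚ[X]) : ℚ[X] :=
  Polynomial.X * derivative p + Polynomial.C (i : ℚ) * (1 - Polynomial.X) * p

theorem Dop_coe_mul_hps_pow (p : ℚ[X]) (i : ℕ) :
    Dop (p * hps ^ i) = (dopDiag i p : ℚ⟦X⟧) * hps ^ i
      - ((Polynomial.C (i : ℚ) * p : ℚ[X]) : ℚ⟦X⟧) * hps ^ (i + 1) := by
  rw [Dop_apply, Derivation.leibniz, ← Dop_apply, ← Dop_apply, Dop_coe, Dop_hps_pow]
  simp only [dopDiag, smul_eq_mul, Polynomial.coe_add, Polynomial.coe_sub, Polynomial.coe_mul,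
    Polynomial.coe_C, Polynomial.coe_X, Polynomial.coe_one]
  simp only [map_natCast]
  ring

noncomputable def dopCoeffs (p : ℕ → ℚ[X]) : ℕ → ℚ[X]
  | 0 => dopDiag 0 (p 0)
  | i + 1 => dopDiag (i + 1) (p (i + 1)) - Polynomial.C (i : ℚ) * p i

theorem sum_dopCoeffs_mul_pow (p : ℕ → ℚ[X]) (n : ℕ) (hp : p n = 0) (φ : ℚ⟦X⟧) :
    ∑ i ∈ Finset.range (n + 1), (dopCoeffs p i : ℚ⟦X⟧) * φ ^ i =
      ∑ i ∈ Finset.range n, ((dopDiag i (p i) : ℚ⟦X⟧) * φ ^ i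
        - ((Polynomial.C (i : ℚ) * p i : ℚ[X]) : ℚ⟦X⟧) * φ ^ (i + 1)) := by
  have h_top : ∑ i ∈ Finset.range n, (dopDiag i (p i) : ℚ⟦X⟧) * φ ^ i =
      ∑ i ∈ Finset.range (n + 1), (dopDiag i (p i) : ℚ⟦X⟧) * φ ^ i := by
    simp [Finset.sum_range_succ _ n, hp, dopDiag]
  have h_succ (i : ℕ) : (dopCoeffs p (i + 1) : ℚ⟦X⟧) * φ ^ (i + 1) =
      (dopDiag (i + 1) (p (i + 1)) : ℚ⟦X⟧) * φ ^ (i + 1)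
        - ((Polynomial.C (i : ℚ) * p i : ℚ[X]) : ℚ⟦X⟧) * φ ^ (i + 1) := by
    rw [dopCoeffs, Polynomial.coe_sub, sub_mul]
  rw [Finset.sum_sub_distrib, h_top, Finset.sum_range_succ', Finset.sum_range_succ' _ n,
    Finset.sum_congr rfl fun i _ => h_succ i, Finset.sum_sub_distrib, dopCoeffs]
  ring

theorem Dop_sum_coe_mul_hps_pow (p : ℕ → ℚ[X]) (n : ℕ) (hp : p n = 0) :
    Dop (∑ i ∈ Finset.range n, (p i : ℚ⟦X⟧) * hps ^ i) =
      ∑ i ∈ Finset.range (n + 1), (dopCoeffs p i : ℚ⟦X⟧) * hps ^ i := by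
  rw [sum_dopCoeffs_mul_pow p n hp, Dop_apply, map_sum]
  exact Finset.sum_congr rfl fun i _ => Dop_coe_mul_hps_pow (p i) i

theorem fmi_eq_zero_of_lt {m i : ℕ} (h : m + 1 < i) : fmi m i = 0 := by
  induction m generalizing i with
  | zero =>
    obtain ⟨k, rfl⟩ : ∃ k, i = k + 2 := ⟨i - 2, by omega⟩
    rfl
  | succ m ih =>
    obtain ⟨k, rfl⟩ := Nat.exists_eq_add_of_le' (by omega : 1 ≤ i)
    rw [fmi, if_neg (by omega), if_neg (by omega)]

theorem fmi_succ (m : ℕ) : fmi (m + 1) = dopCoeffs (fmi m) := by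
  funext i
  cases i with
  | zero => simp [fmi, dopCoeffs, dopDiag]
  | succ i =>
    rw [dopCoeffs, dopDiag, fmi]
    split_ifs with h_top
    · subst h_top
      rw [fmi_eq_zero_of_lt (by omega : m + 1 < m + 1 + 1), Polynomial.smul_eq_C_mul]
      simp only [Polynomial.derivative_zero, mul_zero, Nat.cast_succ, map_neg, map_add,
        map_natCast, map_one]
      ring
    · push_cast
      ring
    · rw [fmi_eq_zero_of_lt (by omega : m + 1 < i + 1), fmi_eq_zero_of_lt (by omega : m + 1 < i)]
      simp

theorem Dpow_f_eq_sum_fmi_mul_h_pow (m : ℕ) :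
    Dop^[m] fps = ∑ i ∈ Finset.range (m + 2), (fmi m i : PowerSeries ℚ) * hps ^ i := by
  induction m with
  | zero =>
    simp only [Function.iterate_zero_apply, Finset.sum_range_succ, Finset.range_one,
      Finset.sum_singleton, fps, fmi, Polynomial.coe_sub, Polynomial.coe_mul, Polynomial.coe_C,
      Polynomial.coe_X, Polynomial.coe_one, pow_zero, pow_one, mul_one, one_mul]
    ring
  | succ m ih =>
    rw [Function.iterate_succ_apply', ih,
      Dop_sum_coe_mul_hps_pow _ _ (fmi_eq_zero_of_lt (by omega)), fmi_succ]
end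

section
/- For every nonnegative integer m: f_{m,0}(t) = t/2 − δ_{m,0}, f_{m,m+1}(t) is the constant polynomial (−1)^m·m!, and for every integer i with 1 ≤ i ≤ m+1 the polynomial f_{m,i}(t) has integer coefficients. -/
open Polynomial PowerSeries

/-!
The recursion for `f_{m,i}` with `i ≥ 1` has integer coefficients and involves `f_{m-1,0}`,
the only non-integral polynomial, solely through the term `(i - 1) f_{m-1,i-1}`, which vanishes
for `i = 1`. Integrality therefore propagates by induction on `m`.
-/

theorem Polynomial.derivative_mem_liftsRing {R S : Type*} [Ring R] [Ring S] {f : R →+* S}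
    {p : S[X]} (hp : p ∈ liftsRing f) : derivative p ∈ liftsRing f := by
  rw [← lifts_iff_liftsRing] at hp ⊢
  obtain ⟨q, rfl⟩ := (mem_lifts p).1 hp
  exact (mem_lifts _).2 ⟨derivative q, (derivative_map q f).symm⟩

theorem fmi_succ_zero (m : ℕ) : fmi (m + 1) 0 = Polynomial.X * derivative (fmi m 0) := rfl

theorem fmi_succ_self_succ (m : ℕ) :
    fmi (m + 1) (m + 2) = -((m : ℚ) + 1) • fmi m (m + 1) := by
  simp [fmi]

theorem fmi_succ_succ {m i : ℕ} (hi : i ≤ m) :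
    fmi (m + 1) (i + 1) = Polynomial.X * derivative (fmi m (i + 1))
      + Polynomial.C ((i : ℚ) + 1) * (1 - Polynomial.X) * fmi m (i + 1)
      - Polynomial.C (i : ℚ) * fmi m i := by
  simp [fmi, show i ≠ m + 1 by omega, hi]

theorem fmi_zero (m : ℕ) :
    fmi m 0 = Polynomial.C (1 / 2 : ℚ) * Polynomial.X - (if m = 0 then 1 else 0) := by
  induction m with
  | zero => simp [fmi]
  | succ m ih => rcases eq_or_ne m 0 with rfl | hm <;> simp [fmi_succ_zero, *]

theorem fmi_self_succ (m : ℕ) : fmi m (m + 1) = Polynomial.C ((-1 : ℚ) ^ m * m.factorial) := by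
  induction m with
  | zero => simp [fmi]
  | succ m ih =>
    rw [fmi_succ_self_succ, ih, smul_C, smul_eq_mul, Nat.factorial_succ, Nat.cast_mul]
    congr 1
    push_cast
    ring

theorem fmi_mem_liftsRing {m i : ℕ} (hi₁ : 1 ≤ i) (hi : i ≤ m + 1) :
    fmi m i ∈ liftsRing (Int.castRingHom ℚ) := by
  induction m generalizing i with
  | zero =>
    obtain rfl : i = 1 := by omega
    exact one_mem _
  | succ m ih =>
    obtain ⟨j, rfl⟩ := Nat.exists_eq_add_of_le' hi₁
    rcases eq_or_lt_of_le (Nat.le_of_succ_le_succ hi) with rfl | hj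
    · rw [fmi_self_succ]
      exact (lifts_iff_liftsRing _ _).1
        (C'_mem_lifts ⟨(-1) ^ (m + 1) * (m + 1).factorial, by simp⟩)
    have hnext := ih le_add_self (Nat.succ_le_of_lt hj)
    have hprev : Polynomial.C (j : ℚ) * fmi m j ∈ liftsRing (Int.castRingHom ℚ) := by
      rcases Nat.eq_zero_or_pos j with rfl | hj₀
      · simp
      · rw [map_natCast]
        exact mul_mem (natCast_mem _ j) (ih hj₀ (by omega))
    rw [fmi_succ_succ (by omega), ← Nat.cast_succ, map_natCast]
    exact sub_mem (add_mem (mul_mem (X_mem_lifts _) (derivative_mem_liftsRing hnext))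
      (mul_mem (mul_mem (natCast_mem _ _) (sub_mem (one_mem _) (X_mem_lifts _))) hnext)) hprev

theorem fmi_basic (m : ℕ) :
    fmi m 0 = Polynomial.C (1/2 : ℚ) * Polynomial.X - (if m = 0 then 1 else 0) ∧
    fmi m (m + 1) = Polynomial.C ((-1 : ℚ) ^ m * m.factorial) ∧
    ∀ i : ℕ, 1 ≤ i → i ≤ m + 1 →
      ∃ q : Polynomial ℤ, fmi m i = q.map (Int.castRingHom ℚ) := by
  refine ⟨fmi_zero m, fmi_self_succ m, fun i hi₁ hi => ?_⟩
  obtain ⟨q, hq⟩ := (mem_lifts _).1 ((lifts_iff_liftsRing _ _).2 (fmi_mem_liftsRing hi₁ hi))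
  exact ⟨q, hq.symm⟩
end

section
/- For every nonnegative integer m, the coefficient of t^m in the polynomial f_{m,1}(t) equals (−1)^m. -/
/-! The recursion gives `f_{m+1,1} = t f_{m,1}' + (1 - t) f_{m,1}`. For a polynomial of degree
at most `n`, the coefficient of `t^(n+1)` in `t p' + (1 - t) p` is `-p_n`, so by induction
`f_{m,1}` has degree at most `m` and its coefficient of `t^m` is `(-1)^m`. -/

open Polynomial PowerSeries

namespace Polynomial

variable {R : Type*} [CommRing R]

theorem coeff_X_mul_derivative_add_one_sub_X_mul_succ (p : R[X]) (k : ℕ) :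
    (X * derivative p + (1 - X) * p).coeff (k + 1) = (k + 2) * p.coeff (k + 1) - p.coeff k := by
  rw [coeff_add, coeff_X_mul, coeff_derivative, sub_mul, one_mul, coeff_sub, coeff_X_mul]
  ring

theorem natDegree_X_mul_derivative_add_one_sub_X_mul_le {p : R[X]} {n : ℕ}
    (hp : p.natDegree ≤ n) : (X * derivative p + (1 - X) * p).natDegree ≤ n + 1 := by
  rw [natDegree_le_iff_coeff_eq_zero]
  intro k hk
  obtain ⟨j, rfl⟩ : ∃ j, k = j + 1 := ⟨k - 1, by omega⟩
  rw [coeff_X_mul_derivative_add_one_sub_X_mul_succ,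
    coeff_eq_zero_of_natDegree_lt (by omega : p.natDegree < j + 1),
    coeff_eq_zero_of_natDegree_lt (by omega : p.natDegree < j)]
  ring

theorem coeff_X_mul_derivative_add_one_sub_X_mul_of_natDegree_le {p : R[X]} {n : ℕ}
    (hp : p.natDegree ≤ n) :
    (X * derivative p + (1 - X) * p).coeff (n + 1) = -p.coeff n := by
  rw [coeff_X_mul_derivative_add_one_sub_X_mul_succ,
    coeff_eq_zero_of_natDegree_lt (by omega : p.natDegree < n + 1)]
  ring

end Polynomial

theorem fmi_zero_one : fmi 0 1 = 1 := by
  rw [fmi]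

theorem fmi_succ_one (m : ℕ) :
    fmi (m + 1) 1 = Polynomial.X * derivative (fmi m 1) + (1 - Polynomial.X) * fmi m 1 := by
  change fmi (m + 1) (0 + 1) = _
  rw [fmi]
  simp

theorem natDegree_fmi_one_le (m : ℕ) : (fmi m 1).natDegree ≤ m := by
  induction m with
  | zero => simp [fmi_zero_one]
  | succ m ih =>
    rw [fmi_succ_one]
    exact natDegree_X_mul_derivative_add_one_sub_X_mul_le ih

theorem fmi_one_coeff (m : ℕ) : (fmi m 1).coeff m = (-1 : ℚ) ^ m := by
  induction m with
  | zero => simp [fmi_zero_one]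
  | succ m ih =>
    rw [fmi_succ_one, coeff_X_mul_derivative_add_one_sub_X_mul_of_natDegree_le
      (natDegree_fmi_one_le m), ih, pow_succ]
    ring
end

section
/- For every nonnegative integer m, the coefficient of t^m in the polynomial g_{m,1}(t) equals (−1)^m. -/
open Polynomial

/-!
For `j ≥ 1` the polynomial `f_{m,j}` has degree at most `m + 1 - j`; by induction `g_{m,1}` has
degree at most `m`, and its coefficient of `t^m` is `(-1)^{m+1}/m!` times the alternating sum
`∑_{j=1}^m (-1)^{j-1} a_{m,j}` of the top coefficients `a_{m,j} = [t^{m+1-j}] f_{m,j}`.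
These satisfy `a_{m,j} = -j a_{m-1,j} - (j-1) a_{m-1,j-1}`, so the alternating partial sums
telescope to `(-1)^i i a_{m-1,i}`; since `a_{m-1,m} = (-1)^{m-1} (m-1)!`, the full sum is `-m!`.
-/

lemma fmi_succ_succ_self (m : ℕ) :
    fmi (m + 1) (m + 1 + 1) = -((m : ℚ) + 1) • fmi m (m + 1) := by
  rw [fmi]; simp

lemma fmi_succ_succ_of_le {m i : ℕ} (hi : i ≤ m) :
    fmi (m + 1) (i + 1) = X * derivative (fmi m (i + 1))
      + C ((i : ℚ) + 1) * (1 - X) * fmi m (i + 1) - C (i : ℚ) * fmi m i := by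
  rw [fmi, if_neg (by omega), if_pos (by omega)]

lemma fmi_self_add_one (m : ℕ) : fmi m (m + 1) = C ((-1 : ℚ) ^ m * m.factorial) := by
  induction m with
  | zero => simp [fmi]
  | succ m ih =>
    rw [fmi_succ_succ_self, ih, smul_C, Nat.factorial_succ, smul_eq_mul]
    congr 1
    push_cast
    ring

lemma coeff_fmi_succ_succ {m i : ℕ} (hi : i ≤ m) (d : ℕ) :
    (fmi (m + 1) (i + 1)).coeff (d + 1) =
      (fmi m (i + 1)).coeff (d + 1) * (d + 1)
        + (i + 1) * ((fmi m (i + 1)).coeff (d + 1) - (fmi m (i + 1)).coeff d)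
        - i * (fmi m i).coeff (d + 1) := by
  rw [fmi_succ_succ_of_le hi, coeff_sub, coeff_add, coeff_X_mul, coeff_derivative, mul_assoc,
    coeff_C_mul, coeff_C_mul, sub_mul, one_mul, coeff_sub, coeff_X_mul]

lemma coeff_fmi_eq_zero {m i k : ℕ} (hi : i ≤ m) (hk : m < k + i) :
    (fmi m (i + 1)).coeff k = 0 := by
  induction m generalizing i k with
  | zero =>
    obtain rfl : i = 0 := by omega
    simp [fmi, coeff_one]
    omega
  | succ m ih =>
    obtain ⟨d, rfl⟩ : ∃ d, k = d + 1 := ⟨k - 1, by omega⟩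
    rcases Nat.lt_or_ge m i with hmi | hmi
    · obtain rfl : i = m + 1 := by omega
      rw [fmi_succ_succ_self, coeff_smul, ih le_rfl (by omega), smul_zero]
    · rw [coeff_fmi_succ_succ hmi, ih hmi (by omega), ih hmi (by omega)]
      rcases i with _ | i
      · simp
      · rw [ih (by omega) (by omega)]
        simp

lemma natDegree_fmi_le {m i : ℕ} (hi : i ≤ m) : (fmi m (i + 1)).natDegree ≤ m - i :=
  natDegree_le_iff_coeff_eq_zero.mpr fun _ hk => coeff_fmi_eq_zero hi (by omega)

lemma coeff_fmi_succ_succ_top {m i : ℕ} (hi : i ≤ m) :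
    (fmi (m + 1) (i + 1)).coeff (m + 1 - i) =
      -((i : ℚ) + 1) * (fmi m (i + 1)).coeff (m - i) - i * (fmi m i).coeff (m + 1 - i) := by
  rw [show m + 1 - i = m - i + 1 by omega, coeff_fmi_succ_succ hi,
    coeff_fmi_eq_zero hi (by omega)]
  ring

lemma sum_range_alternating_top_coeff_fmi {m i : ℕ} (hi : i ≤ m + 1) :
    ∑ j ∈ Finset.range i, (-1 : ℚ) ^ j * (fmi (m + 1) (j + 1)).coeff (m + 1 - j) =
      (-1) ^ i * i * (fmi m i).coeff (m + 1 - i) := by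
  induction i with
  | zero => simp
  | succ i ih =>
    rw [Finset.sum_range_succ, ih (by omega), coeff_fmi_succ_succ_top (by omega),
      show m + 1 - (i + 1) = m - i by omega]
    push_cast
    ring

lemma sum_alternating_top_coeff_fmi (m : ℕ) :
    ∑ j ∈ Finset.range (m + 1), (-1 : ℚ) ^ j * (fmi (m + 1) (j + 1)).coeff (m + 1 - j) =
      -((m + 1).factorial : ℚ) := by
  rw [sum_range_alternating_top_coeff_fmi le_rfl, Nat.sub_self, fmi_self_add_one, coeff_C_zero,
    Nat.factorial_succ]
  have hsign : (-1 : ℚ) ^ (m + 1) * (-1) ^ m = -1 := by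
    rw [← pow_add]
    exact Odd.neg_one_pow ⟨m, by ring⟩
  push_cast
  linear_combination ((m : ℚ) + 1) * m.factorial * hsign

lemma gmi_zero_one : gmi 0 1 = 1 := by
  rw [gmi]; simp

lemma gmi_succ_one (m : ℕ) :
    gmi (m + 1) 1 = C ((-1 : ℚ) ^ (m + 2) / (m + 1).factorial) *
      ∑ j ∈ Finset.range (m + 1), fmi (m + 1) (j + 1) * gmi j 1 := by
  let F : ℕ → ℚ[X] := fun j => fmi (m + 1) j * gmi (j - 1) 1
  rw [gmi, if_neg (by omega), dif_pos (by omega), Finset.sum_attach _ F,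
    ← Finset.Ico_add_one_right_eq_Icc, Finset.range_eq_Ico]
  exact congrArg _ (Finset.sum_Ico_add' F 0 (m + 1) 1).symm

lemma natDegree_gmi_one_le (m : ℕ) : (gmi m 1).natDegree ≤ m := by
  induction m using Nat.strong_induction_on with
  | _ m ih =>
    rcases m with _ | m
    · simp [gmi_zero_one]
    rw [gmi_succ_one]
    refine (natDegree_C_mul_le _ _).trans (natDegree_sum_le_of_forall_le _ _ fun j hj => ?_)
    have hj : j ≤ m := Finset.mem_range_succ_iff.mp hj
    calc (fmi (m + 1) (j + 1) * gmi j 1).natDegree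
        ≤ (m + 1 - j) + j :=
          natDegree_mul_le_of_le (natDegree_fmi_le (by omega)) (ih j (by omega))
      _ = m + 1 := by omega

lemma coeff_gmi_succ_one (m : ℕ) :
    (gmi (m + 1) 1).coeff (m + 1) = (-1 : ℚ) ^ (m + 2) / (m + 1).factorial *
      ∑ j ∈ Finset.range (m + 1),
        (gmi j 1).coeff j * (fmi (m + 1) (j + 1)).coeff (m + 1 - j) := by
  rw [gmi_succ_one, coeff_C_mul, finsetSum_coeff]
  congr 1
  refine Finset.sum_congr rfl fun j hj => ?_
  have hj : j ≤ m := Finset.mem_range_succ_iff.mp hj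
  rw [mul_comm, ← coeff_mul_add_eq_of_natDegree_le (natDegree_gmi_one_le j)
    (natDegree_fmi_le (by omega)), mul_comm, show j + (m + 1 - j) = m + 1 by omega]

theorem gmi_one_coeff (m : ℕ) : (gmi m 1).coeff m = (-1 : ℚ) ^ m := by
  induction m using Nat.strong_induction_on with
  | _ m ih =>
    rcases m with _ | m
    · simp [gmi_zero_one]
    rw [coeff_gmi_succ_one, Finset.sum_congr rfl fun j hj => by rw [ih j (Finset.mem_range.mp hj)],
      sum_alternating_top_coeff_fmi]
    field_simp
    ring
end

section
/- For any positive integer k and any nonnegative integers p_1, p_2: ∑_{i=1}^{k−1} i^{p_1}·(k−i)^{p_2} = ∑ (−1)^{j+p_1}·C(i+j, i)·C(p_2, i+j−p_1)·(B_i/(j+1))·(k−1)^{j+1}·k^{p_1+p_2−i−j}, where the sum on the right runs over all pairs of nonnegative integers (i, j) with p_1 ≤ i + j ≤ p_1 + p_2, C(a,b) denotes the binomial coefficient, and B_i the Bernoulli numbers (B_1 = −1/2). In particular, the right-hand side, viewed as a polynomial in k with rational coefficients, has degree p_1 + p_2 + 1, with leading coefficient p_1!·p_2!/(p_1+p_2+1)!.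 -/
/-!
Expanding `(k - i) ^ p₂` binomially turns the left side into
`∑ s, (-1) ^ s * C(p₂, s) * k ^ (p₂ - s) * ∑_{1 ≤ i < k} i ^ (p₁ + s)`, and Faulhaber's formula
writes each inner power sum as a polynomial in `k - 1` of degree `p₁ + s + 1` with leading
coefficient `1 / (p₁ + s + 1)`. Grouping the terms `(i, j)` of the right side by
`s = i + j - p₁` gives exactly this expression. Its coefficient of `k ^ (p₁ + p₂ + 1)` is
`∑ s, (-1) ^ s * C(p₂, s) / (p₁ + s + 1) = ∫₀¹ x ^ p₁ * (1 - x) ^ p₂ dx = p₁! p₂! / (p₁ + p₂ + 1)!`.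
-/

open Polynomial

/-- The right-hand side of the power-sum identity, as a polynomial in `k`. -/
noncomputable def rhsPoly (p₁ p₂ : ℕ) : Polynomial ℚ :=
  ∑ ij ∈ (Finset.range (p₁ + p₂ + 1) ×ˢ Finset.range (p₁ + p₂ + 1)).filter
      (fun ij => p₁ ≤ ij.1 + ij.2 ∧ ij.1 + ij.2 ≤ p₁ + p₂),
    Polynomial.C ((-1 : ℚ) ^ (ij.2 + p₁) * (ij.1 + ij.2).choose ij.1 *
        (p₂.choose (ij.1 + ij.2 - p₁)) * _root_.bernoulli ij.1 / (ij.2 + 1)) *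
      (Polynomial.X - 1) ^ (ij.2 + 1) * Polynomial.X ^ (p₁ + p₂ - ij.1 - ij.2)

open Finset

theorem sum_pow_mul_sub_pow {ι R : Type*} [CommRing R] (I : Finset ι) (f : ι → R) (k : R)
    (p₁ p₂ : ℕ) :
    ∑ i ∈ I, f i ^ p₁ * (k - f i) ^ p₂
      = ∑ s ∈ range (p₂ + 1), (-1) ^ s * p₂.choose s * k ^ (p₂ - s) * ∑ i ∈ I, f i ^ (p₁ + s) := by
  simp_rw [mul_sum, ← neg_add_eq_sub, add_pow, mul_sum]
  rw [sum_comm]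
  refine sum_congr rfl fun s _ ↦ sum_congr rfl fun i _ ↦ ?_
  rw [neg_pow, pow_add]
  ring

/-- The Beta integral `∫₀¹ xᵐ (1 - x)ⁿ dx`, with `(1 - x)ⁿ` expanded binomially. -/
theorem sum_range_choose_mul_neg_one_pow_div (m n : ℕ) :
    ∑ s ∈ range (n + 1), (n.choose s : ℚ) * ((-1) ^ s / (m + s + 1))
      = m.factorial * n.factorial / (m + n + 1).factorial := by
  induction n generalizing m with
  | zero => simp [Nat.factorial_succ, field]
  | succ n ih =>
    have shifted :
        ∑ s ∈ range (n + 1), (n.choose s : ℚ) * ((-1) ^ (s + 1) / (m + (s + 1 : ℕ) + 1))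
          = -((m + 1).factorial * n.factorial / (m + 1 + n + 1).factorial) := by
      rw [← ih (m + 1), ← sum_neg_distrib]
      refine sum_congr rfl fun s _ ↦ ?_
      push_cast
      ring
    rw [sum_choose_succ_mul (fun s _ ↦ (-1 : ℚ) ^ s / (m + s + 1)), ih, shifted,
      show m + 1 + n + 1 = m + n + 1 + 1 by omega, show m + (n + 1) + 1 = m + n + 1 + 1 by omega,
      Nat.factorial_succ (m + n + 1), Nat.factorial_succ m, Nat.factorial_succ n]
    push_cast
    field_simp
    ring

noncomputable def faulhaberPoly (n : ℕ) : ℚ[X] :=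
  ∑ x ∈ antidiagonal n,
    C ((-1) ^ x.1 * n.choose x.1 * _root_.bernoulli x.1 / (x.2 + 1)) * X ^ (x.2 + 1)

theorem eval_faulhaberPoly (n N : ℕ) :
    (faulhaberPoly n).eval (N : ℚ) = ∑ i ∈ Ico 1 (N + 1), (i : ℚ) ^ n := by
  rw [sum_Ico_pow, faulhaberPoly, eval_finsetSum, Nat.sum_antidiagonal_eq_sum_range_succ_mk]
  refine sum_congr rfl fun t ht ↦ ?_
  have ht : t ≤ n := Nat.lt_succ_iff.mp (mem_range.mp ht)
  have hchoose : (n.choose t : ℚ) * (n + 1) = (n + 1).choose t * ((n - t : ℕ) + 1) := by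
    have := Nat.choose_mul_succ_eq n t
    rw [show n + 1 - t = n - t + 1 by omega] at this
    exact_mod_cast this
  simp only [eval_mul, eval_C, eval_pow, eval_X, bernoulli'_eq_bernoulli,
    show n - t + 1 = n + 1 - t by omega]
  field_simp
  linear_combination _root_.bernoulli t * (N : ℚ) ^ (n + 1 - t) * hchoose

theorem coeff_faulhaberPoly_succ (n : ℕ) : (faulhaberPoly n).coeff (n + 1) = 1 / (n + 1) := by
  rw [faulhaberPoly, finsetSum_coeff, sum_eq_single (0, n)]
  · simp
  · rintro ⟨i, j⟩ hij hne
    rw [HasAntidiagonal.mem_antidiagonal] at hij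
    rw [coeff_C_mul_X_pow, if_neg]
    rintro h
    apply hne
    ext <;> simp <;> omega
  · simp

theorem natDegree_faulhaberPoly (n : ℕ) : (faulhaberPoly n).natDegree = n + 1 := by
  refine natDegree_eq_of_le_of_coeff_ne_zero ?_ (by rw [coeff_faulhaberPoly_succ]; positivity)
  refine natDegree_sum_le_of_forall_le _ _ fun x hx ↦ ?_
  rw [HasAntidiagonal.mem_antidiagonal] at hx
  exact natDegree_C_mul_X_pow_le _ _ |>.trans (by omega)

theorem leadingCoeff_faulhaberPoly (n : ℕ) : (faulhaberPoly n).leadingCoeff = 1 / (n + 1) := by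
  rw [leadingCoeff, natDegree_faulhaberPoly, coeff_faulhaberPoly_succ]

theorem natDegree_faulhaberPoly_comp_X_sub_one (n : ℕ) :
    ((faulhaberPoly n).comp (X - 1)).natDegree = n + 1 := by
  rw [natDegree_comp, natDegree_faulhaberPoly, ← C_1, natDegree_X_sub_C, mul_one]

theorem leadingCoeff_faulhaberPoly_comp_X_sub_one (n : ℕ) :
    ((faulhaberPoly n).comp (X - 1)).leadingCoeff = 1 / (n + 1) := by
  rw [← C_1, leadingCoeff_comp (by rw [natDegree_X_sub_C]; exact one_ne_zero),
    leadingCoeff_faulhaberPoly, leadingCoeff_X_sub_C, one_pow, mul_one]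

theorem rhsPoly_eq_sum_faulhaberPoly_comp (p₁ p₂ : ℕ) :
    rhsPoly p₁ p₂ = ∑ s ∈ range (p₂ + 1),
      C ((-1 : ℚ) ^ s * p₂.choose s) * (X ^ (p₂ - s) * (faulhaberPoly (p₁ + s)).comp (X - 1)) := by
  rw [rhsPoly, ← sum_fiberwise_of_maps_to (g := fun ij ↦ ij.1 + ij.2 - p₁) (t := range (p₂ + 1))
    (fun ij hij ↦ by simp only [mem_filter, mem_product, mem_range] at hij ⊢; omega)]
  refine sum_congr rfl fun s hs ↦ ?_
  have hs : s ≤ p₂ := Nat.lt_succ_iff.mp (mem_range.mp hs)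
  have fiber : ((range (p₁ + p₂ + 1) ×ˢ range (p₁ + p₂ + 1)).filter
      (fun ij ↦ p₁ ≤ ij.1 + ij.2 ∧ ij.1 + ij.2 ≤ p₁ + p₂)).filter
      (fun ij ↦ ij.1 + ij.2 - p₁ = s) = antidiagonal (p₁ + s) := by
    ext ⟨i, j⟩
    simp only [mem_filter, mem_product, mem_range, HasAntidiagonal.mem_antidiagonal]
    omega
  rw [fiber, faulhaberPoly, Polynomial.sum_comp, mul_sum, mul_sum]
  refine sum_congr rfl fun ⟨i, j⟩ hij ↦ ?_
  rw [HasAntidiagonal.mem_antidiagonal] at hij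
  have sign : (-1 : ℚ) ^ (j + p₁) = (-1) ^ s * (-1) ^ i := by
    rw [← pow_add, neg_one_pow_eq_pow_mod_two, neg_one_pow_eq_pow_mod_two (s + i),
      show (j + p₁) % 2 = (s + i) % 2 by omega]
  have coeff :
      (-1 : ℚ) ^ (j + p₁) * (i + j).choose i * p₂.choose s * _root_.bernoulli i / (j + 1)
        = ((-1) ^ s * p₂.choose s) * ((-1) ^ i * (i + j).choose i * _root_.bernoulli i / (j + 1)) := by
    rw [sign]
    ring
  rw [mul_comp, C_comp, X_pow_comp, show i + j - p₁ = s by omega,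
    show p₁ + p₂ - i - j = p₂ - s by omega, ← hij, coeff, C_mul]
  ring

theorem natDegree_rhsPoly_le (p₁ p₂ : ℕ) : (rhsPoly p₁ p₂).natDegree ≤ p₁ + p₂ + 1 := by
  rw [rhsPoly_eq_sum_faulhaberPoly_comp]
  refine natDegree_sum_le_of_forall_le _ _ fun s hs ↦ ?_
  have hs : s ≤ p₂ := Nat.lt_succ_iff.mp (mem_range.mp hs)
  refine natDegree_C_mul_le _ _ |>.trans <| natDegree_mul_le.trans ?_
  rw [natDegree_X_pow, natDegree_faulhaberPoly_comp_X_sub_one]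
  omega

theorem coeff_rhsPoly (p₁ p₂ : ℕ) :
    (rhsPoly p₁ p₂).coeff (p₁ + p₂ + 1)
      = p₁.factorial * p₂.factorial / (p₁ + p₂ + 1).factorial := by
  rw [rhsPoly_eq_sum_faulhaberPoly_comp, finsetSum_coeff,
    ← sum_range_choose_mul_neg_one_pow_div]
  refine sum_congr rfl fun s hs ↦ ?_
  have hs : s ≤ p₂ := Nat.lt_succ_iff.mp (mem_range.mp hs)
  rw [coeff_C_mul, coeff_X_pow_mul', if_pos (by omega),
    show p₁ + p₂ + 1 - (p₂ - s) = p₁ + s + 1 by omega,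
    ← natDegree_faulhaberPoly_comp_X_sub_one (p₁ + s), coeff_natDegree,
    leadingCoeff_faulhaberPoly_comp_X_sub_one]
  push_cast
  ring

theorem eval_rhsPoly (p₁ p₂ N : ℕ) :
    (rhsPoly p₁ p₂).eval ((N : ℚ) + 1) = ∑ s ∈ range (p₂ + 1),
      (-1) ^ s * p₂.choose s * ((N : ℚ) + 1) ^ (p₂ - s) *
        ∑ i ∈ Ico 1 (N + 1), (i : ℚ) ^ (p₁ + s) := by
  rw [rhsPoly_eq_sum_faulhaberPoly_comp, eval_finsetSum]
  refine sum_congr rfl fun s _ ↦ ?_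
  rw [eval_mul, eval_mul, eval_comp, eval_sub, eval_X, eval_one, add_sub_cancel_right,
    eval_faulhaberPoly, eval_C, eval_pow, eval_X]
  ring

theorem power_sum_two (p₁ p₂ : ℕ) :
    (∀ k : ℕ, 1 ≤ k →
      ∑ i ∈ Finset.Ico 1 k, (i : ℚ) ^ p₁ * ((k - i : ℕ) : ℚ) ^ p₂
        = (rhsPoly p₁ p₂).eval (k : ℚ)) ∧
    (rhsPoly p₁ p₂).degree = (p₁ + p₂ + 1 : ℕ) ∧
    (rhsPoly p₁ p₂).leadingCoeff
      = (p₁.factorial * p₂.factorial : ℚ) / (p₁ + p₂ + 1).factorial := by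
  have hdeg : (rhsPoly p₁ p₂).degree = (p₁ + p₂ + 1 : ℕ) :=
    degree_eq_of_le_of_coeff_ne_zero (natDegree_le_iff_degree_le.mp (natDegree_rhsPoly_le p₁ p₂))
      (by rw [coeff_rhsPoly]; positivity)
  refine ⟨fun k hk ↦ ?_, hdeg, ?_⟩
  · obtain ⟨N, rfl⟩ := Nat.exists_eq_add_of_le' hk
    rw [Nat.cast_succ, eval_rhsPoly, ← sum_pow_mul_sub_pow]
    refine sum_congr rfl fun i hi ↦ ?_
    rw [Nat.cast_sub (mem_Ico.mp hi).2.le, Nat.cast_succ]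
  · rw [leadingCoeff, natDegree_eq_of_degree_eq_some hdeg, coeff_rhsPoly]
end

section
/- Let n be a positive integer and let p_1, …, p_n be nonnegative integers. Then there exists a polynomial f(x) ∈ ℚ[x] of degree exactly p_1 + ⋯ + p_n + n − 1 such that for every integer k ≥ n: ∑_{k_1+⋯+k_n=k, k_j≥1} k_1^{p_1}·k_2^{p_2}⋯k_n^{p_n} = f(k), where the sum runs over all compositions (k_1,…,k_n) of k into n positive integer parts. -/
/-!
Write `S_n(k)` for the sum over the compositions of `k` into `n` parts. Peeling off the last part
gives `S_{n+1}(k) = ∑_{n ≤ j < k} (k - j) ^ p · S_n(j)`, and by Faulhaber's formula such a sum of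
the values of a polynomial `g` is again a polynomial in `k`, of degree at most `deg g + p + 1`.
By induction `S_n` agrees with a polynomial `f` of degree at most `D = ∑ p_j + n - 1`. For the
reverse inequality, the `q ^ (n - 1)` compositions of `(2n - 1) q` whose first `n - 1` parts lie
in `[q, 2q)` have all parts at least `q`, so `S_n((2n - 1) q) ≥ q ^ D` for every `q ≥ 1`, which a
polynomial of degree less than `D` cannot achieve.
-/

/-- The set of compositions of `k` into `n` positive parts. -/
noncomputable def comps (n k : ℕ) : Finset (Fin n → ℕ) :=
  (Fintype.piFinset fun _ => Finset.Icc 1 k).filter (fun v => ∑ j, v j = k)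

open Polynomial Finset

theorem exists_eval_eq_sum_range_pow (t : ℕ) :
    ∃ F : ℚ[X], F.natDegree ≤ t + 1 ∧
      ∀ k : ℕ, ∑ j ∈ range k, (j : ℚ) ^ t = F.eval (k : ℚ) := by
  refine ⟨∑ i ∈ range (t + 1),
    C (_root_.bernoulli i * (t + 1).choose i / (t + 1)) * X ^ (t + 1 - i), ?_, fun k => ?_⟩
  · exact natDegree_sum_le_of_forall_le _ _ fun i _ =>
      natDegree_C_mul_X_pow_le _ _ |>.trans (Nat.sub_le _ _)
  · simp only [sum_range_pow, eval_finsetSum, eval_mul, eval_C, eval_pow, eval_X]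
    exact sum_congr rfl fun i _ => by ring

theorem exists_eval_eq_sum_range_eval (g : ℚ[X]) :
    ∃ G : ℚ[X], G.natDegree ≤ g.natDegree + 1 ∧
      ∀ k : ℕ, ∑ j ∈ range k, g.eval (j : ℚ) = G.eval (k : ℚ) := by
  choose F hFdeg hFeval using exists_eval_eq_sum_range_pow
  refine ⟨∑ t ∈ range (g.natDegree + 1), C (g.coeff t) * F t, ?_, fun k => ?_⟩
  · refine natDegree_sum_le_of_forall_le _ _ fun t ht => ?_
    refine (natDegree_C_mul_le _ _).trans ((hFdeg t).trans ?_)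
    simpa [Nat.lt_succ_iff] using ht
  · simp only [eval_eq_sum_range (p := g), eval_finsetSum, eval_mul, eval_C, ← hFeval,
      mul_sum]
    exact sum_comm

theorem exists_eval_eq_sum_Ico_sub_pow_mul_eval (p a : ℕ) (g : ℚ[X]) :
    ∃ H : ℚ[X], H.natDegree ≤ g.natDegree + p + 1 ∧
      ∀ k : ℕ, a ≤ k →
        ∑ j ∈ Ico a k, ((k : ℚ) - j) ^ p * g.eval (j : ℚ) = H.eval (k : ℚ) := by
  induction p generalizing g with
  | zero =>
    obtain ⟨G, hGdeg, hGeval⟩ := exists_eval_eq_sum_range_eval g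
    refine ⟨G - C (G.eval (a : ℚ)), (natDegree_sub_C).trans_le hGdeg, fun k hak => ?_⟩
    simp [sum_Ico_eq_sub _ hak, hGeval]
  | succ p ih =>
    -- `(k - j) ^ (p + 1) g(j) = k · (k - j) ^ p g(j) - (k - j) ^ p (X g)(j)`
    obtain ⟨H₁, hH₁deg, hH₁eval⟩ := ih g
    obtain ⟨H₂, hH₂deg, hH₂eval⟩ := ih (X * g)
    have hX : (X : ℚ[X]).natDegree ≤ 1 := natDegree_X_le
    refine ⟨X * H₁ - H₂, (natDegree_sub_le _ _).trans (max_le ?_ ?_), fun k hak => ?_⟩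
    · exact natDegree_mul_le.trans (by omega)
    · exact hH₂deg.trans (by have := natDegree_mul_le (p := X) (q := g); omega)
    · simp only [eval_sub, eval_mul, eval_X, ← hH₁eval k hak, ← hH₂eval k hak, mul_sum,
        ← sum_sub_distrib]
      exact sum_congr rfl fun j _ => by ring

theorem mem_comps {n k : ℕ} {v : Fin n → ℕ} :
    v ∈ comps n k ↔ (∀ j, 0 < v j) ∧ ∑ j, v j = k := by
  simp only [comps, mem_filter, Fintype.mem_piFinset, mem_Icc]
  refine ⟨fun h => ⟨fun j => (h.1 j).1, h.2⟩, fun ⟨hpos, hsum⟩ => ⟨fun j => ⟨hpos j, ?_⟩, hsum⟩⟩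
  exact hsum ▸ single_le_sum (fun i _ => Nat.zero_le (v i)) (mem_univ j)

theorem le_of_mem_comps {n k : ℕ} {v : Fin n → ℕ} (hv : v ∈ comps n k) : n ≤ k := by
  obtain ⟨hpos, rfl⟩ := mem_comps.1 hv
  simpa using card_nsmul_le_sum univ v 1 fun j _ => hpos j

theorem snoc_mem_comps_succ {n j m : ℕ} {w : Fin n → ℕ} :
    (Fin.snoc w m : Fin (n + 1) → ℕ) ∈ comps (n + 1) (j + m) ↔ 0 < m ∧ w ∈ comps n j := by
  simp only [mem_comps, Fin.forall_fin_succ', Fin.sum_univ_castSucc, Fin.snoc_castSucc,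
    Fin.snoc_last, add_left_inj]
  tauto

theorem comps_one {k : ℕ} (hk : 0 < k) : comps 1 k = {fun _ => k} := by
  ext v
  simp only [mem_comps, mem_singleton, Fin.sum_univ_one, funext_iff, Fin.forall_fin_one]
  omega

theorem sum_comps_succ {M : Type*} [AddCommMonoid M] (n k : ℕ) (F : (Fin (n + 1) → ℕ) → M) :
    ∑ v ∈ comps (n + 1) k, F v =
      ∑ j ∈ Ico n k, ∑ w ∈ comps n j, F (Fin.snoc w (k - j)) := by
  have hsplit : ∀ v ∈ comps (n + 1) k,
      0 < v (Fin.last n) ∧ ∑ i, Fin.init v i + v (Fin.last n) = k := fun v hv =>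
    ⟨(mem_comps.1 hv).1 _, (Fin.sum_univ_castSucc v).symm.trans (mem_comps.1 hv).2⟩
  have hinit : ∀ v ∈ comps (n + 1) k, Fin.init v ∈ comps n (∑ i, Fin.init v i) := fun v hv =>
    mem_comps.2 ⟨fun i => (mem_comps.1 hv).1 _, rfl⟩
  have hleft : ∀ v ∈ comps (n + 1) k, Fin.snoc (Fin.init v) (k - ∑ i, Fin.init v i) = v := by
    intro v hv
    rw [← (hsplit v hv).2, Nat.add_sub_cancel_left, Fin.snoc_init_self]
  rw [sum_sigma']
  refine sum_nbij' (fun v => ⟨∑ i, Fin.init v i, Fin.init v⟩) (fun x => Fin.snoc x.2 (k - x.1))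
    (fun v hv => ?_) (fun x hx => ?_) hleft (fun x hx => ?_) (fun v hv => by rw [hleft v hv])
  · have := le_of_mem_comps (hinit v hv)
    have := hsplit v hv
    simp only [mem_sigma, mem_Ico]
    exact ⟨⟨by omega, by omega⟩, hinit v hv⟩
  · simp only [mem_sigma, mem_Ico] at hx ⊢
    have := snoc_mem_comps_succ.2 ⟨Nat.sub_pos_of_lt hx.1.2, hx.2⟩
    rwa [Nat.add_sub_cancel' hx.1.2.le] at this
  · simp only [mem_sigma] at hx
    simp [Fin.init_snoc, (mem_comps.1 hx.2).2]

theorem exists_natDegree_le_sum_comps_eq_eval {n : ℕ} (hn : 1 ≤ n) (p : Fin n → ℕ) :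
    ∃ f : ℚ[X], f.natDegree ≤ ∑ j, p j + (n - 1) ∧
      ∀ k : ℕ, n ≤ k → ∑ v ∈ comps n k, ∏ j, (v j : ℚ) ^ p j = f.eval (k : ℚ) := by
  induction n, hn using Nat.le_induction with
  | base =>
    refine ⟨X ^ p 0, by simp, fun k hk => ?_⟩
    simp [comps_one hk]
  | succ n hn ih =>
    obtain ⟨g, hgdeg, hgeval⟩ := ih (fun i => p i.castSucc)
    obtain ⟨H, hHdeg, hHeval⟩ := exists_eval_eq_sum_Ico_sub_pow_mul_eval (p (Fin.last n)) n g
    refine ⟨H, hHdeg.trans ?_, fun k hk => ?_⟩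
    · rw [Fin.sum_univ_castSucc]
      omega
    · rw [sum_comps_succ, ← hHeval k (by omega)]
      refine sum_congr rfl fun j hj => ?_
      rw [mem_Ico] at hj
      simp only [Fin.prod_univ_castSucc, Fin.snoc_castSucc, Fin.snoc_last, ← sum_mul,
        hgeval j hj.1, Nat.cast_sub hj.2.le]
      ring

theorem pow_le_sum_comps (m : ℕ) (p : Fin (m + 1) → ℕ) {q k : ℕ} (hq : 0 < q)
    (hk : (2 * m + 1) * q ≤ k) :
    (q : ℚ) ^ (∑ j, p j + m) ≤ ∑ v ∈ comps (m + 1) k, ∏ j, (v j : ℚ) ^ p j := by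
  set A := Fintype.piFinset fun _ : Fin m => Ico q (2 * q)
  set ι : (Fin m → ℕ) → Fin (m + 1) → ℕ := fun w => Fin.snoc w (k - ∑ i, w i)
  have hbox : ∀ w ∈ A, ∀ i, q ≤ w i ∧ w i < 2 * q := fun w hw i =>
    mem_Ico.1 (Fintype.mem_piFinset.1 hw i)
  have hsum : ∀ w ∈ A, ∑ i, w i + q ≤ k := fun w hw => by
    calc ∑ i, w i + q ≤ ∑ _i : Fin m, 2 * q + q := by
          gcongr with i; exact (hbox w hw i).2.le
      _ = (2 * m + 1) * q := by
          simp only [sum_const, card_univ, Fintype.card_fin, smul_eq_mul]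
          ring
      _ ≤ k := hk
  have hlarge : ∀ w ∈ A, ∀ j, q ≤ ι w j := by
    intro w hw j
    refine Fin.lastCases ?_ (fun i => ?_) j
    · simp only [ι, Fin.snoc_last]
      have := hsum w hw
      omega
    · simpa only [ι, Fin.snoc_castSucc] using (hbox w hw i).1
  have hmem : ∀ w ∈ A, ι w ∈ comps (m + 1) k := by
    intro w hw
    have := snoc_mem_comps_succ.2 ⟨hq.trans_le (by simpa [ι] using hlarge w hw (Fin.last m)),
      mem_comps.2 ⟨fun i => hq.trans_le (hbox w hw i).1, rfl⟩⟩
    rwa [Nat.add_sub_cancel' (by have := hsum w hw; omega)] at this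
  have hinj : Set.InjOn ι A := fun w₁ _ w₂ _ h => by
    simpa only [ι, Fin.init_snoc] using congrArg Fin.init h
  calc (q : ℚ) ^ (∑ j, p j + m) = ∑ _w ∈ A, (q : ℚ) ^ ∑ j, p j := by
        simp only [A, sum_const, Fintype.card_piFinset, Nat.card_Ico, prod_const, card_univ,
          Fintype.card_fin, show 2 * q - q = q by omega, nsmul_eq_mul]
        push_cast
        ring
    _ ≤ ∑ w ∈ A, ∏ j, (ι w j : ℚ) ^ p j := sum_le_sum fun w hw => by
        rw [← prod_pow_eq_pow_sum]
        exact prod_le_prod (fun _ _ => by positivity) fun j _ =>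
          pow_le_pow_left₀ (by positivity) (by exact_mod_cast hlarge w hw j) _
    _ = ∑ v ∈ A.image ι, ∏ j, (v j : ℚ) ^ p j :=
        (sum_image (f := fun v => ∏ j, (v j : ℚ) ^ p j) hinj).symm
    _ ≤ ∑ v ∈ comps (m + 1) k, ∏ j, (v j : ℚ) ^ p j :=
        sum_le_sum_of_subset_of_nonneg (image_subset_iff.2 hmem) fun _ _ _ => by positivity

theorem Polynomial.degree_eq_of_natDegree_le_of_pow_le_eval {𝕜 : Type*} [NormedField 𝕜]
    [LinearOrder 𝕜] [IsStrictOrderedRing 𝕜] [OrderTopology 𝕜] [Archimedean 𝕜] {g : 𝕜[X]}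
    {D : ℕ} (hg : g.natDegree ≤ D) (h : ∀ q : ℕ, 0 < q → (q : 𝕜) ^ D ≤ g.eval (q : 𝕜)) :
    g.degree = D := by
  have hg0 : g ≠ 0 := by
    rintro rfl
    have := h 1 one_pos
    simp only [Nat.cast_one, one_pow, eval_zero] at this
    linarith
  rw [degree_eq_natDegree hg0, Nat.cast_inj]
  refine le_antisymm hg (not_lt.1 fun hlt => ?_)
  -- otherwise `X ^ D - g` tends to `+∞` but is nonpositive at all positive integers
  have hlt' : g.degree < (X ^ D : 𝕜[X]).degree := by
    rw [degree_X_pow, degree_eq_natDegree hg0]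
    exact_mod_cast hlt
  have hdeg : (X ^ D - g).degree = (D : WithBot ℕ) := by
    rw [degree_sub_eq_left_of_degree_lt hlt', degree_X_pow]
  have hlead : (X ^ D - g).leadingCoeff = 1 := by
    rw [leadingCoeff_sub_of_degree_lt hlt', leadingCoeff_X_pow]
  have htend := (tendsto_atTop_of_leadingCoeff_nonneg (X ^ D - g)
    (by rw [hdeg]; exact_mod_cast (Nat.zero_le _).trans_lt hlt)
    (by rw [hlead]; exact zero_le_one)).comp tendsto_natCast_atTop_atTop
  obtain ⟨q, hq, hpos⟩ := ((Filter.eventually_gt_atTop 0).and (htend.eventually_gt_atTop 0)).exists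
  simp only [Function.comp_apply, eval_sub, eval_pow, eval_X] at hpos
  linarith [h q hq]

theorem power_sum_compositions (n : ℕ) (hn : 1 ≤ n) (p : Fin n → ℕ) :
    ∃ f : Polynomial ℚ,
      f.degree = ((∑ j, p j) + n - 1 : ℕ) ∧
      ∀ k : ℕ, n ≤ k →
        ∑ v ∈ comps n k, ∏ j, (v j : ℚ) ^ (p j) = f.eval (k : ℚ) := by
  obtain ⟨m, rfl⟩ : ∃ m, n = m + 1 := ⟨n - 1, by omega⟩
  obtain ⟨f, hfdeg, hfeval⟩ := exists_natDegree_le_sum_comps_eq_eval hn p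
  refine ⟨f, ?_, hfeval⟩
  -- the lower bound is only available along the progression `k = (2m + 1) q`, hence the rescaling
  have ha : (2 * m + 1 : ℚ) ≠ 0 := by positivity
  rw [show ∑ j, p j + (m + 1) - 1 = ∑ j, p j + m by omega, ← mul_one f.degree,
    ← degree_C_mul_X ha, ← degree_comp (by rw [degree_C_mul_X ha]; exact zero_lt_one)]
  refine degree_eq_of_natDegree_le_of_pow_le_eval ?_ fun q hq => ?_
  · rw [natDegree_comp, natDegree_C_mul_X _ ha, mul_one]
    omega
  · have := hfeval ((2 * m + 1) * q) (by nlinarith)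
    push_cast at this
    simpa only [eval_comp, eval_mul, eval_C, eval_X, ← this] using pow_le_sum_comps m p hq le_rfl
end
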